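/- arXiv:1501.05803 — 7 statements merged into one kernel-verified Lean document; each statement's English description precedes it below -/
import Mathlib

section
/- Let c be a nonzero rational number and let (x, y) be a rational point with y² = x³ − c²·x. Define X = x² + 2cx − c², Y = x² − 2cx − c², and Z = 4y(x² + c²). Then X⁴ − Y⁴ = c·Z². Moreover, if y ≠ 0 and x ∉ {0, c, −c} then X·Y·Z ≠ 0. -/
lemma rat_sq_ne_two (q : ℚ) : q ^ 2 ≠ 2 := by
  intro h
  have h2 : ((q : ℝ)) ^ 2 = 2 := by exact_mod_cast h
  have hs : Real.sqrt 2 = |(q : ℝ)| := by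
    rw [← h2, Real.sqrt_sq_eq_abs]
  exact irrational_sqrt_two ⟨|q|, by push_cast; rw [hs]⟩

/-- From a rational point `(x, y)` on `y² = x³ − c²x`, the quadruple
`X = x² + 2cx − c²`, `Y = x² − 2cx − c²`, `Z = 4y(x² + c²)` satisfies
`X⁴ − Y⁴ = cZ²`; moreover `XYZ ≠ 0` when `y ≠ 0` and `x ∉ {0, c, −c}`. -/
theorem quartic_of_point_on_Ec (c x y : ℚ) (hc : c ≠ 0) (h : y ^ 2 = x ^ 3 - c ^ 2 * x) :
    (x ^ 2 + 2 * c * x - c ^ 2) ^ 4 - (x ^ 2 - 2 * c * x - c ^ 2) ^ 4 =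
      c * (4 * y * (x ^ 2 + c ^ 2)) ^ 2 ∧
    (y ≠ 0 → x ≠ 0 → x ≠ c → x ≠ -c →
      (x ^ 2 + 2 * c * x - c ^ 2) * (x ^ 2 - 2 * c * x - c ^ 2) *
        (4 * y * (x ^ 2 + c ^ 2)) ≠ 0) := by
  constructor
  · linear_combination (-16 * c * (x ^ 2 + c ^ 2) ^ 2) * h
  · intro hy _ _ _
    have hX : x ^ 2 + 2 * c * x - c ^ 2 ≠ 0 := by
      intro h0
      apply rat_sq_ne_two ((x + c) / c)
      field_simp
      ring_nf
      nlinarith [h0]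
    have hY : x ^ 2 - 2 * c * x - c ^ 2 ≠ 0 := by
      intro h0
      apply rat_sq_ne_two ((x - c) / c)
      field_simp
      ring_nf
      nlinarith [h0]
    have hZ : 4 * y * (x ^ 2 + c ^ 2) ≠ 0 := by
      have : x ^ 2 + c ^ 2 > 0 := by positivity
      intro h0
      apply hy
      nlinarith [h0]
    exact mul_ne_zero (mul_ne_zero hX hY) hZ
end

section
/- Let c be a nonzero integer. The equation X⁴ − Y⁴ = c·Z² has a rational solution with X·Y·Z ≠ 0 if and only if |c| is the area of a right triangle with rational sides, i.e., there exist positive rationals a, b, h with a² + b² = h² and a·b/2 = |c|. -/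
/-!
A solution of `X⁴ − Y⁴ = nZ²` gives the right triangle with legs `(X⁴ − Y⁴)/(XYZ)` and `2XY/Z`
and hypotenuse `(X⁴ + Y⁴)/(XYZ)`, whose area is `(X⁴ − Y⁴)/Z² = n`; signs are repaired by taking
absolute values. Conversely, a right triangle with legs `a ≠ b`, hypotenuse `h` and area `n`
satisfies `((a + b)/2)⁴ − ((a − b)/2)⁴ = n h²`; the legs differ because `√2` is irrational.
Since `X` and `Y` can be swapped, solvability for `n` and `−n` agree.
-/

def QuarticSolvable (n : ℚ) : Prop :=
  ∃ X Y Z : ℚ, X * Y * Z ≠ 0 ∧ X ^ 4 - Y ^ 4 = n * Z ^ 2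

def IsRightTriangleArea (n : ℚ) : Prop :=
  ∃ a b h : ℚ, 0 < a ∧ 0 < b ∧ 0 < h ∧ a ^ 2 + b ^ 2 = h ^ 2 ∧ a * b / 2 = n

lemma Rat.not_isSquare_two : ¬IsSquare (2 : ℚ) := by
  rw [show (2 : ℚ) = (2 : ℕ) by norm_num, Rat.isSquare_natCast_iff]
  exact Nat.prime_two.prime.not_isSquare

lemma quarticSolvable_neg {n : ℚ} : QuarticSolvable (-n) ↔ QuarticSolvable n := by
  have swap : ∀ m : ℚ, QuarticSolvable m → QuarticSolvable (-m) := by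
    rintro m ⟨X, Y, Z, hXYZ, heq⟩
    exact ⟨Y, X, Z, by rwa [mul_comm Y X], by linear_combination -heq⟩
  exact ⟨fun h => neg_neg n ▸ swap _ h, swap n⟩

lemma quarticSolvable_abs {n : ℚ} : QuarticSolvable |n| ↔ QuarticSolvable n :=
  abs_by_cases (QuarticSolvable · ↔ QuarticSolvable n) Iff.rfl quarticSolvable_neg

lemma QuarticSolvable.isRightTriangleArea_abs {n : ℚ} (hsol : QuarticSolvable n) (hn : n ≠ 0) :
    IsRightTriangleArea |n| := by
  obtain ⟨X, Y, Z, hXYZ, heq⟩ := hsol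
  have hX : X ≠ 0 := left_ne_zero_of_mul (left_ne_zero_of_mul hXYZ)
  have hY : Y ≠ 0 := right_ne_zero_of_mul (left_ne_zero_of_mul hXYZ)
  have hZ : Z ≠ 0 := right_ne_zero_of_mul hXYZ
  set a := (X ^ 4 - Y ^ 4) / (X * Y * Z)
  set b := 2 * X * Y / Z
  set h := (X ^ 4 + Y ^ 4) / (X * Y * Z)
  have ha : a ≠ 0 := div_ne_zero (by rw [heq]; exact mul_ne_zero hn (pow_ne_zero 2 hZ)) hXYZ
  have hb : b ≠ 0 := by positivity
  have hh : h ≠ 0 := div_ne_zero (by positivity) hXYZ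
  have hpyth : a ^ 2 + b ^ 2 = h ^ 2 := by
    simp only [a, b, h]
    field_simp
    ring
  have harea : a * b / 2 = n := by
    simp only [a, b]
    field_simp
    linear_combination heq
  clear_value a b h
  refine ⟨|a|, |b|, |h|, abs_pos.2 ha, abs_pos.2 hb, abs_pos.2 hh, ?_, ?_⟩
  · simpa only [sq_abs] using hpyth
  · rw [← harea, abs_div, abs_mul, abs_two]

lemma IsRightTriangleArea.quarticSolvable {n : ℚ} (htri : IsRightTriangleArea n) :
    QuarticSolvable n := by
  obtain ⟨a, b, h, ha, hb, hh, hpyth, harea⟩ := htri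
  have hab : a - b ≠ 0 := by
    intro hab
    obtain rfl : a = b := sub_eq_zero.1 hab
    exact Rat.not_isSquare_two ⟨h / a, by field_simp; linear_combination hpyth⟩
  refine ⟨(a + b) / 2, (a - b) / 2, h, by positivity, ?_⟩
  linear_combination h ^ 2 * harea + a * b / 2 * hpyth

/-- For a nonzero integer `c`, the equation `X⁴ − Y⁴ = cZ²` has a rational solution
with `XYZ ≠ 0` if and only if `|c|` is the area of a right triangle with rational
sides. -/
theorem quartic_solvable_iff_congruent (c : ℤ) (hc : c ≠ 0) :
    (∃ X Y Z : ℚ, X * Y * Z ≠ 0 ∧ X ^ 4 - Y ^ 4 = (c : ℚ) * Z ^ 2) ↔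
    (∃ a b h : ℚ, 0 < a ∧ 0 < b ∧ 0 < h ∧ a ^ 2 + b ^ 2 = h ^ 2 ∧
      a * b / 2 = (|c| : ℤ)) := by
  change QuarticSolvable c ↔ IsRightTriangleArea ((|c| : ℤ) : ℚ)
  rw [Int.cast_abs]
  exact ⟨fun hsol => hsol.isRightTriangleArea_abs (Int.cast_ne_zero.2 hc),
    fun htri => quarticSolvable_abs.1 htri.quarticSolvable⟩
end

section
/- Let (x, y) be a rational point with y² = x³ − 36x, and suppose t := x² − 12x − 36 ≠ 0. Set V = x² + 12x − 36 and U = 4y(x² + 36)/t. Then (U + t)⁴ + (U − t)⁴ = 2(U⁴ + V⁴), i.e., (U + t, U − t, U, V) is a rational solution of the Diophantine equation X⁴ + Y⁴ = 2(U⁴ + V⁴). -/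
/-! With `t = x² − 12x − 36` and `V = x² + 12x − 36` one has `V − t = 24x`, `V + t = 2(x² − 36)` and
`V² + t² = 2(x² + 36)²`, so `V⁴ − t⁴ = 96 (x³ − 36x)(x² + 36)² = 96 y² (x² + 36)² = 6 U² t²`.
Since `(U + t)⁴ + (U − t)⁴ = 2(U⁴ + 6U²t² + t⁴)`, this is exactly the required equation. -/

theorem add_pow_four_add_sub_pow_four {R : Type*} [CommRing R] (a b : R) :
    (a + b) ^ 4 + (a - b) ^ 4 = 2 * (a ^ 4 + 6 * a ^ 2 * b ^ 2 + b ^ 4) := by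
  ring

theorem add_pow_four_add_sub_pow_four_eq_two_mul {R : Type*} [CommRing R] {a b c : R}
    (h : 6 * a ^ 2 * b ^ 2 + b ^ 4 = c ^ 4) :
    (a + b) ^ 4 + (a - b) ^ 4 = 2 * (a ^ 4 + c ^ 4) := by
  rw [add_pow_four_add_sub_pow_four, ← h]
  ring

theorem pow_four_sub_pow_four_E6 {R : Type*} [CommRing R] (x : R) :
    (x ^ 2 + 12 * x - 36) ^ 4 - (x ^ 2 - 12 * x - 36) ^ 4 =
      96 * (x ^ 3 - 36 * x) * (x ^ 2 + 36) ^ 2 := by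
  ring

/-- A rational point `(x, y)` on `E₆ : y² = x³ − 36x` with `t = x² − 12x − 36 ≠ 0`
yields, via `V = x² + 12x − 36` and `U = 4y(x² + 36)/t`, a rational solution
`(U + t, U − t, U, V)` of `X⁴ + Y⁴ = 2(U⁴ + V⁴)`. -/
theorem solution_from_E6 (x y : ℚ) (h : y ^ 2 = x ^ 3 - 36 * x)
    (ht : x ^ 2 - 12 * x - 36 ≠ 0) :
    (4 * y * (x ^ 2 + 36) / (x ^ 2 - 12 * x - 36) + (x ^ 2 - 12 * x - 36)) ^ 4 +
      (4 * y * (x ^ 2 + 36) / (x ^ 2 - 12 * x - 36) - (x ^ 2 - 12 * x - 36)) ^ 4 =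
    2 * ((4 * y * (x ^ 2 + 36) / (x ^ 2 - 12 * x - 36)) ^ 4 +
      (x ^ 2 + 12 * x - 36) ^ 4) := by
  apply add_pow_four_add_sub_pow_four_eq_two_mul
  have hUt : 4 * y * (x ^ 2 + 36) / (x ^ 2 - 12 * x - 36) * (x ^ 2 - 12 * x - 36) =
      4 * y * (x ^ 2 + 36) := div_mul_cancel₀ _ ht
  calc 6 * (4 * y * (x ^ 2 + 36) / (x ^ 2 - 12 * x - 36)) ^ 2 * (x ^ 2 - 12 * x - 36) ^ 2
        + (x ^ 2 - 12 * x - 36) ^ 4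
      = 96 * y ^ 2 * (x ^ 2 + 36) ^ 2 + (x ^ 2 - 12 * x - 36) ^ 4 := by
        rw [mul_assoc, ← mul_pow, hUt]; ring
    _ = (x ^ 2 + 12 * x - 36) ^ 4 := by
        rw [h, ← pow_four_sub_pow_four_E6]; ring
end

section
/- Let b, c, e be integers satisfying c² = b³ − 36·b·e⁴ (equivalently, (b/e², c/e³) is a rational point on the elliptic curve y² = x³ − 36x when e ≠ 0). Define X = b⁴ + 1296e⁸ + 864be⁶ + 72b²e⁴ + 144ce⁵ − 24b³e² + 4b²ce, Y = −864be⁶ − b⁴ − 1296e⁸ − 72b²e⁴ + 144ce⁵ + 24b³e² + 4b²ce, U = 4(b² + 36e⁴)·c·e, and V = (b² − 36e⁴ − 12be²)(b² − 36e⁴ + 12be²). Then X⁴ + Y⁴ = 2(U⁴ + V⁴). -/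
/-- Integer parametrization: if `c² = b³ − 36be⁴`, then the displayed quadruple
`(X, Y, U, V)` satisfies `X⁴ + Y⁴ = 2(U⁴ + V⁴)`. -/
theorem integer_parametrization (b c e : ℤ) (h : c ^ 2 = b ^ 3 - 36 * b * e ^ 4) :
    (b ^ 4 + 1296 * e ^ 8 + 864 * b * e ^ 6 + 72 * b ^ 2 * e ^ 4 + 144 * c * e ^ 5
        - 24 * b ^ 3 * e ^ 2 + 4 * b ^ 2 * c * e) ^ 4 +
      (-864 * b * e ^ 6 - b ^ 4 - 1296 * e ^ 8 - 72 * b ^ 2 * e ^ 4 + 144 * c * e ^ 5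
        + 24 * b ^ 3 * e ^ 2 + 4 * b ^ 2 * c * e) ^ 4 =
    2 * ((4 * (b ^ 2 + 36 * e ^ 4) * c * e) ^ 4 +
      ((b ^ 2 - 36 * e ^ 4 - 12 * b * e ^ 2) * (b ^ 2 - 36 * e ^ 4 + 12 * b * e ^ 2)) ^ 4) := by
  linear_combination (417942208512*e^26 + 557256278016*b*e^24 + 255409127424*b^2*e^22
    + 46438023168*b^3*e^20 + 4837294080*b^4*e^18 + 859963392*b^5*e^16 - 107495424*b^6*e^14
    - 23887872*b^7*e^12 + 3732480*b^8*e^10 - 995328*b^9*e^8 + 152064*b^10*e^6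
    - 9216*b^11*e^4 + 192*b^12*e^2) * h
end

section
/- The point P = (−3, 9) lies on the elliptic curve E₆ : y² = x³ − 36x over ℚ and has infinite order in the group E₆(ℚ) of rational points; that is, n·P ≠ O for every positive integer n, where O is the identity (point at infinity). -/
/-- The elliptic curve `E₆ : y² = x³ − 36x` over `ℚ`. -/
def E6 : WeierstrassCurve ℚ := ⟨0, 0, 0, -36, 0⟩

/-!
Doubling on `y² = x³ − 36x` sends `x` to `(x² + 36)² / (4x(x² − 36))`. When `v₂(x) ≤ 0`, both
`x² ± 36` have valuation `2 v₂(x)`, so doubling lowers `v₂(x)` by exactly `2`. Since `v₂(−3) = 0`,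
the points `2ᵏ • P` have `x`-coordinates of valuation `−2k` and are pairwise distinct, which is
impossible for a point of finite order.
-/

open WeierstrassCurve.Affine WeierstrassCurve.Affine.Point

lemma not_isOfFinAddOrder_of_injective_nsmul_comp {G : Type*} [AddMonoid G] {a : G} {f : ℕ → ℕ}
    (hf : Function.Injective fun k => f k • a) : ¬IsOfFinAddOrder a := fun ha =>
  Set.infinite_of_injective_forall_mem hf
    (fun k => (AddSubmonoid.mem_multiples_iff _ _).2 ⟨f k, rfl⟩) ha.finite_multiples

lemma add_ne_zero_of_padicValRat_lt {p : ℕ} {q r : ℚ}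
    (h : padicValRat p q < padicValRat p r) : q + r ≠ 0 := by
  intro hqr
  rw [eq_neg_of_add_eq_zero_left hqr, padicValRat.neg] at h
  exact lt_irrefl _ h

lemma padicValRat_two_thirtySix : padicValRat 2 36 = 2 := by
  rw [show (36 : ℚ) = ((2 ^ 2 * 9 : ℕ) : ℚ) by norm_num, padicValRat.of_nat,
    padicValNat.mul (by norm_num) (by norm_num), padicValNat.prime_pow,
    padicValNat.eq_zero_of_not_dvd (by norm_num)]
  rfl

lemma E6_equation_iff {x y : ℚ} : E6.toAffine.Equation x y ↔ y ^ 2 = x * (x ^ 2 - 36) := by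
  rw [equation_iff]
  simp only [E6]
  constructor <;> intro h <;> linear_combination h

lemma E6_nonsingular_neg_three_nine : E6.toAffine.Nonsingular (-3) 9 := by
  rw [nonsingular_iff, equation_iff]
  norm_num [E6]

/-- The `x`-coordinate of `2Q` for `Q = (x, y)`, read off the tangent line at `Q`. -/
def E6_doubleX (x : ℚ) : ℚ := (x ^ 2 + 36) ^ 2 / (4 * (x * (x ^ 2 - 36)))

lemma E6_some_add_self {x y : ℚ} (h : E6.toAffine.Nonsingular x y) (hx : x * (x ^ 2 - 36) ≠ 0) :
    ∃ (y' : ℚ) (h' : E6.toAffine.Nonsingular (E6_doubleX x) y'),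
      some _ _ h + some _ _ h = some _ _ h' := by
  have hy2 : y ^ 2 = x * (x ^ 2 - 36) := E6_equation_iff.1 h.1
  have hy : y ≠ 0 := by rintro rfl; exact hx (by simpa using hy2.symm)
  have hne : y ≠ E6.toAffine.negY x y := by
    simp only [negY, E6]
    intro h'
    exact hy (by linarith)
  have hslope : E6.toAffine.slope x x y y = (3 * x ^ 2 - 36) / (2 * y) := by
    rw [slope_of_Y_ne rfl hne]
    simp only [negY, E6]
    ring_nf
  have hX : E6.toAffine.addX x x (E6.toAffine.slope x x y y) = E6_doubleX x := by
    rw [hslope]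
    simp only [addX, E6, E6_doubleX]
    rw [div_pow, mul_pow, hy2]
    have hx0 : x ≠ 0 := left_ne_zero_of_mul hx
    have hx36 : x ^ 2 - 36 ≠ 0 := right_ne_zero_of_mul hx
    field_simp
    ring
  refine ⟨_, hX ▸ nonsingular_add h h (fun hxy => hne hxy.2), ?_⟩
  rw [add_self_of_Y_ne hne]
  congr

lemma sq_sub_thirtySix_ne_zero {x : ℚ} (hv : padicValRat 2 x ≤ 0) : x ^ 2 - 36 ≠ 0 := by
  rw [sub_eq_add_neg]
  apply add_ne_zero_of_padicValRat_lt (p := 2)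
  rw [padicValRat.neg, padicValRat_two_thirtySix, padicValRat.pow]
  push_cast
  omega

lemma padicValRat_E6_doubleX {x : ℚ} (hx : x ≠ 0) (hv : padicValRat 2 x ≤ 0) :
    padicValRat 2 (E6_doubleX x) = padicValRat 2 x - 2 := by
  have hx36 := sq_sub_thirtySix_ne_zero hv
  have hsq : padicValRat 2 (x ^ 2) = 2 * padicValRat 2 x := by simp
  have hlt : padicValRat 2 (x ^ 2) < padicValRat 2 36 := by
    rw [hsq, padicValRat_two_thirtySix]
    omega
  have hplus : padicValRat 2 (x ^ 2 + 36) = 2 * padicValRat 2 x := by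
    rw [padicValRat.add_eq_of_lt (by positivity) (pow_ne_zero 2 hx) (by norm_num) hlt, hsq]
  have hminus : padicValRat 2 (x ^ 2 - 36) = 2 * padicValRat 2 x := by
    rw [sub_eq_add_neg] at hx36 ⊢
    rw [padicValRat.add_eq_of_lt hx36 (pow_ne_zero 2 hx) (by norm_num)
      (by rwa [padicValRat.neg]), hsq]
  have hfour : padicValRat 2 4 = 2 := by
    rw [show (4 : ℚ) = ((2 ^ 2 : ℕ) : ℚ) by norm_num, padicValRat.of_nat, padicValNat.prime_pow]
    rfl
  rw [E6_doubleX, padicValRat.div (by positivity) (by positivity), padicValRat.pow,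
    padicValRat.mul four_ne_zero (mul_ne_zero hx hx36), padicValRat.mul hx hx36, hplus, hminus,
    hfour]
  push_cast
  ring

lemma E6_exists_two_pow_nsmul (k : ℕ) : ∃ (x y : ℚ) (h : E6.toAffine.Nonsingular x y),
    2 ^ k • some _ _ E6_nonsingular_neg_three_nine = some _ _ h ∧ x ≠ 0 ∧
      padicValRat 2 x = -2 * k := by
  induction k with
  | zero =>
    exact ⟨-3, 9, _, one_nsmul _, by norm_num,
      by simp [padicValRat, padicValInt, padicValNat.eq_zero_of_not_dvd]⟩
  | succ k ih =>
    obtain ⟨x, y, h, hk, hx, hv⟩ := ih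
    have hv' : padicValRat 2 x ≤ 0 := by omega
    have hx36 := sq_sub_thirtySix_ne_zero hv'
    obtain ⟨y', h', hdouble⟩ := E6_some_add_self h (mul_ne_zero hx hx36)
    refine ⟨_, y', h', ?_, by unfold E6_doubleX; positivity, ?_⟩
    · rw [pow_succ, mul_nsmul, hk, two_nsmul, hdouble]
    · rw [padicValRat_E6_doubleX hx hv', hv]
      push_cast
      ring

lemma E6_injective_two_pow_nsmul :
    Function.Injective fun k : ℕ => 2 ^ k • some _ _ E6_nonsingular_neg_three_nine := by
  intro k l hkl
  obtain ⟨x, y, h, hk, -, hvk⟩ := E6_exists_two_pow_nsmul k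
  obtain ⟨x', y', h', hl, -, hvl⟩ := E6_exists_two_pow_nsmul l
  simp only [hk, hl, some.injEq] at hkl
  rw [hkl.1] at hvk
  omega

/-- The point `P = (−3, 9)` lies on `E₆ : y² = x³ − 36x` and has infinite order
in the Mordell–Weil group `E₆(ℚ)`: `n • P ≠ O` for every positive integer `n`. -/
theorem point_neg_three_nine_infinite_order :
    ∃ h : E6.toAffine.Nonsingular (-3) 9,
      ∀ n : ℕ, 0 < n → n • (WeierstrassCurve.Affine.Point.some _ _ h) ≠ 0 :=
  ⟨E6_nonsingular_neg_three_nine, fun n hn hnP =>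
    not_isOfFinAddOrder_of_injective_nsmul_comp E6_injective_two_pow_nsmul
      (isOfFinAddOrder_iff_nsmul_eq_zero.2 ⟨n, hn, hnP⟩)⟩
end

section
/- There exist infinitely many quadruples (X, Y, U, V) of integers with X·Y·U·V ≠ 0 and gcd(X, Y, U, V) = 1 satisfying X⁴ + Y⁴ = 2(U⁴ + V⁴). -/
/-!
Writing `X = V + p²`, `Y = V - p²`, `U = p q` turns `X⁴ + Y⁴ = 2(U⁴ + V⁴)` into
`q⁴ = p⁴ + 6V²`, whose solutions are the points `(q / p, 6V / p²)` of the elliptic curve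
`y² = 6(x⁴ - 1)`. Starting from `(p, q, V) = (1, 7, 20)` and repeatedly doubling, the invariants
`p` coprime to `6V` and `V` even, nonzero are preserved; they make `(X, Y, U, V)` primitive and
nonzero, while `|p q|` grows strictly, so the solutions are pairwise distinct.
-/

structure QuarticTriple (R : Type*) where
  p : R
  q : R
  V : R

namespace QuarticTriple

variable {R : Type*} [CommRing R]

def IsOnCurve (t : QuarticTriple R) : Prop :=
  t.q ^ 4 = t.p ^ 4 + 6 * t.V ^ 2

def toQuad (t : QuarticTriple R) : R × R × R × R :=
  (t.V + t.p ^ 2, t.V - t.p ^ 2, t.p * t.q, t.V)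

/-- Doubling on `y² = 6(x⁴ - 1)`, in the coordinates `x = q / p`, `y = 6V / p²`. -/
def dup (t : QuarticTriple R) : QuarticTriple R where
  p := t.p * (27 * t.V ^ 4 - t.p ^ 8)
  q := t.q * (9 * t.V ^ 4 + 12 * t.V ^ 2 * t.p ^ 4 + t.p ^ 8)
  V := t.V * (81 * t.V ^ 8 - 324 * t.V ^ 6 * t.p ^ 4 - 162 * t.V ^ 4 * t.p ^ 8
    - 36 * t.V ^ 2 * t.p ^ 12 - 3 * t.p ^ 16)

theorem IsOnCurve.dup {t : QuarticTriple R} (h : t.IsOnCurve) : t.dup.IsOnCurve := by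
  simp only [IsOnCurve, QuarticTriple.dup] at *
  linear_combination (9 * t.V ^ 4 + 12 * t.V ^ 2 * t.p ^ 4 + t.p ^ 8) ^ 4 * h

theorem IsOnCurve.toQuad_sum_fourth_powers {t : QuarticTriple R} (h : t.IsOnCurve) :
    (t.V + t.p ^ 2) ^ 4 + (t.V - t.p ^ 2) ^ 4 = 2 * ((t.p * t.q) ^ 4 + t.V ^ 4) := by
  unfold IsOnCurve at h
  linear_combination (-2 * t.p ^ 4) * h

end QuarticTriple

section DupCoprime

variable {R : Type*} [CommRing R] {p V : R}

theorem isCoprime_dup_factor_V (h : IsCoprime p (6 * V)) :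
    IsCoprime p (81 * V ^ 8 - 324 * V ^ 6 * p ^ 4 - 162 * V ^ 4 * p ^ 8
      - 36 * V ^ 2 * p ^ 12 - 3 * p ^ 16) := by
  have h81 : IsCoprime p (81 * V ^ 8) :=
    (h.pow_right (n := 8)).of_isCoprime_of_dvd_right ⟨2 ^ 8 * 3 ^ 4, by ring⟩
  rw [← IsCoprime.add_mul_left_right_iff
    (z := -324 * V ^ 6 * p ^ 3 - 162 * V ^ 4 * p ^ 7 - 36 * V ^ 2 * p ^ 11 - 3 * p ^ 15)] at h81
  convert h81 using 1
  ring

theorem isCoprime_dup_factor_p (h : IsCoprime p (6 * V)) (hV : Even V) :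
    IsCoprime (27 * V ^ 4 - p ^ 8) (6 * V) := by
  obtain ⟨k, rfl⟩ := hV
  convert (h.pow_left (m := 8)).neg_left.add_mul_right_left (9 * k * (k + k) ^ 2) using 1
  ring

/-- Modulo `27V⁴ - p⁸`, the right-hand factor times `5V² - p⁴` is `2⁵ 3⁴ V¹⁰`. -/
theorem isCoprime_dup_factors (h : IsCoprime (27 * V ^ 4 - p ^ 8) (6 * V)) :
    IsCoprime (27 * V ^ 4 - p ^ 8) (81 * V ^ 8 - 324 * V ^ 6 * p ^ 4 - 162 * V ^ 4 * p ^ 8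
      - 36 * V ^ 2 * p ^ 12 - 3 * p ^ 16) := by
  have h2592 : IsCoprime (27 * V ^ 4 - p ^ 8) (2592 * V ^ 10) :=
    (h.pow_right (n := 10)).of_isCoprime_of_dvd_right ⟨2 ^ 5 * 3 ^ 6, by ring⟩
  refine IsCoprime.of_mul_right_right (y := 5 * V ^ 2 - p ^ 4) ?_
  rw [← IsCoprime.add_mul_left_right_iff (z := (3 * p ^ 8 + 36 * V ^ 2 * p ^ 4 + 243 * V ^ 4)
    * (5 * V ^ 2 - p ^ 4) - 1296 * V ^ 6)] at h2592
  convert h2592 using 1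
  ring

end DupCoprime

namespace QuarticTriple

structure Admissible (t : QuarticTriple ℤ) : Prop where
  isOnCurve : t.IsOnCurve
  even_V : Even t.V
  V_ne_zero : t.V ≠ 0
  isCoprime : IsCoprime t.p (6 * t.V)

namespace Admissible

variable {t : QuarticTriple ℤ}

theorem odd_p (h : t.Admissible) : Odd t.p := by
  rw [← Int.not_even_iff_odd, even_iff_two_dvd]
  intro h2
  have := h.isCoprime.isUnit_of_dvd' h2 (dvd_mul_of_dvd_left (by norm_num) _)
  norm_num [Int.isUnit_iff] at this

theorem p_ne_zero (h : t.Admissible) : t.p ≠ 0 := by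
  rintro h0
  simpa [h0] using h.odd_p

theorem q_ne_zero (h : t.Admissible) : t.q ≠ 0 := by
  intro h0
  have hcurve := h.isOnCurve
  rw [IsOnCurve, h0] at hcurve
  linarith [(by decide : Even 4).pow_pos h.p_ne_zero, sq_nonneg t.V]

theorem dup (h : t.Admissible) : t.dup.Admissible := by
  have hE : Odd (81 * t.V ^ 8 - 324 * t.V ^ 6 * t.p ^ 4 - 162 * t.V ^ 4 * t.p ^ 8
      - 36 * t.V ^ 2 * t.p ^ 12 - 3 * t.p ^ 16) := by
    have hEven : Even (81 * t.V ^ 8 - 324 * t.V ^ 6 * t.p ^ 4 - 162 * t.V ^ 4 * t.p ^ 8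
        - 36 * t.V ^ 2 * t.p ^ 12) := by
      simp [h.even_V, parity_simps]
    exact hEven.sub_odd ((by decide : Odd (3 : ℤ)).mul h.odd_p.pow)
  have hp := isCoprime_dup_factor_p h.isCoprime h.even_V
  refine ⟨h.isOnCurve.dup, h.even_V.mul_right _, mul_ne_zero h.V_ne_zero ?_, ?_⟩
  · rintro h0
    simp [h0] at hE
  · rw [QuarticTriple.dup, ← mul_assoc]
    exact (h.isCoprime.mul_right (isCoprime_dup_factor_V h.isCoprime)).mul_left
      (hp.mul_right (isCoprime_dup_factors hp))

theorem abs_mul_lt_dup (h : t.Admissible) : |t.p * t.q| < |t.dup.p * t.dup.q| := by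
  have hb : 27 * t.V ^ 4 - t.p ^ 8 ≠ 0 := right_ne_zero_of_mul h.dup.p_ne_zero
  have ha : 1 < 9 * t.V ^ 4 + 12 * t.V ^ 2 * t.p ^ 4 + t.p ^ 8 := by
    have : 0 < t.V ^ 4 := (by decide : Even 4).pow_pos h.V_ne_zero
    nlinarith [pow_two_nonneg (t.V * t.p ^ 2), pow_two_nonneg (t.p ^ 4)]
  have hpq : 0 < |t.p * t.q| := abs_pos.mpr (mul_ne_zero h.p_ne_zero h.q_ne_zero)
  calc |t.p * t.q|
      < |t.p * t.q| * |9 * t.V ^ 4 + 12 * t.V ^ 2 * t.p ^ 4 + t.p ^ 8| :=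
        lt_mul_of_one_lt_right hpq (ha.trans_le (le_abs_self _))
    _ ≤ |t.p * t.q| * |9 * t.V ^ 4 + 12 * t.V ^ 2 * t.p ^ 4 + t.p ^ 8|
          * |27 * t.V ^ 4 - t.p ^ 8| :=
        le_mul_of_one_le_right (by positivity) (Int.one_le_abs hb)
    _ = |t.dup.p * t.dup.q| := by
        simp only [QuarticTriple.dup, ← abs_mul]
        ring_nf

theorem toQuad_prod_ne_zero (h : t.Admissible) :
    (t.V + t.p ^ 2) * (t.V - t.p ^ 2) * (t.p * t.q) * t.V ≠ 0 := by
  have hX : Odd (t.V + t.p ^ 2) := h.even_V.add_odd h.odd_p.pow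
  have hY : Odd (t.V - t.p ^ 2) := h.even_V.sub_odd h.odd_p.pow
  refine mul_ne_zero (mul_ne_zero (mul_ne_zero ?_ ?_)
    (mul_ne_zero h.p_ne_zero h.q_ne_zero)) h.V_ne_zero
  · rintro h0
    simp [h0] at hX
  · rintro h0
    simp [h0] at hY

theorem toQuad_gcd_eq_one (h : t.Admissible) :
    Int.gcd (Int.gcd (Int.gcd (t.V + t.p ^ 2) (t.V - t.p ^ 2)) (t.p * t.q)) t.V = 1 := by
  rw [← Int.isCoprime_iff_gcd_eq_one]
  have hX : IsCoprime (t.V + t.p ^ 2) t.V := by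
    simpa using (h.isCoprime.of_mul_right_right.pow_left (m := 2)).mul_add_left_left 1
  exact hX.of_isCoprime_of_dvd_left ((Int.gcd_dvd_left _ _).trans (Int.gcd_dvd_left _ _))

end Admissible

def seq (n : ℕ) : QuarticTriple ℤ := dup^[n] ⟨1, 7, 20⟩

theorem admissible_seq (n : ℕ) : (seq n).Admissible := by
  induction n with
  | zero =>
    show (⟨1, 7, 20⟩ : QuarticTriple ℤ).Admissible
    exact ⟨by norm_num [IsOnCurve], by decide, by decide, isCoprime_one_left⟩
  | succ n ih =>
    rw [seq, Function.iterate_succ_apply']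
    exact ih.dup

theorem strictMono_abs_mul_seq : StrictMono fun n => |(seq n).p * (seq n).q| :=
  strictMono_nat_of_lt_succ fun n => by
    simpa only [seq, Function.iterate_succ_apply'] using (admissible_seq n).abs_mul_lt_dup

theorem injective_toQuad_seq : Function.Injective fun n => (seq n).toQuad := fun _ _ h =>
  strictMono_abs_mul_seq.injective (congrArg (fun x => |x.2.2.1|) h)

end QuarticTriple

/-- There are infinitely many primitive solutions in nonzero integers of
`X⁴ + Y⁴ = 2(U⁴ + V⁴)`. -/
theorem infinitely_many_primitive_solutions :
    {q : ℤ × ℤ × ℤ × ℤ |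
      q.1 * q.2.1 * q.2.2.1 * q.2.2.2 ≠ 0 ∧
      Int.gcd (Int.gcd (Int.gcd q.1 q.2.1) q.2.2.1) q.2.2.2 = 1 ∧
      q.1 ^ 4 + q.2.1 ^ 4 = 2 * (q.2.2.1 ^ 4 + q.2.2.2 ^ 4)}.Infinite := by
  refine Set.infinite_of_injective_forall_mem QuarticTriple.injective_toQuad_seq fun n => ?_
  have h := QuarticTriple.admissible_seq n
  exact ⟨h.toQuad_prod_ne_zero, h.toQuad_gcd_eq_one, h.isOnCurve.toQuad_sum_fourth_powers⟩
end

section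
/- For every rational point (x, y) on the curve y² = x³ − 36x with y ≠ 0, one has x ∉ {0, 6, −6} and x² − 12x − 36 ≠ 0 and x² + 12x − 36 ≠ 0; consequently the associated quadruple t = x² − 12x − 36, V = x² + 12x − 36, U = 4y(x² + 36)/t gives a solution (U + t, U − t, U, V) of X⁴ + Y⁴ = 2(U⁴ + V⁴) with all four entries nonzero. -/
/-!
Writing `t = x² − 12x − 36` and `V = x² + 12x − 36`, one has `V − t = 24x`, `V + t = 2(x² − 36)`
and `V² + t² = 2(x² + 36)²`, so on the curve `V⁴ − t⁴ = 96 y² (x² + 36)² = 6 (U t)²`; this is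
exactly the condition for `(U + t)⁴ + (U − t)⁴ = 2(U⁴ + V⁴)`. Nontriviality reduces to `2` and
`7` not being rational squares: `t = 0` or `V = 0` would make `((x ∓ 6)/6)² = 2`, and `U = ±t`
would force `V⁴ = 7 t⁴`.
-/

section

variable {K : Type*} [Field K]

lemma sq_sub_mul_sq_ne_zero {d : K} (hd : ¬IsSquare d) (a : K) {b : K} (hb : b ≠ 0) :
    a ^ 2 - d * b ^ 2 ≠ 0 := fun h ↦
  hd ⟨a / b, by field_simp; linear_combination -h⟩

lemma add_pow_four_add_sub_pow_four_of_mul_sq {U t V : K} (h : 6 * (U * t) ^ 2 = V ^ 4 - t ^ 4) :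
    (U + t) ^ 4 + (U - t) ^ 4 = 2 * (U ^ 4 + V ^ 4) := by
  linear_combination 2 * h

lemma sq_ne_sq_of_mul_sq {U t V : K} (h7 : ¬IsSquare (7 : K)) (ht : t ≠ 0)
    (h : 6 * (U * t) ^ 2 = V ^ 4 - t ^ 4) : U ^ 2 ≠ t ^ 2 := fun hU ↦
  sq_sub_mul_sq_ne_zero h7 (V ^ 2) (pow_ne_zero 2 ht) <| by
    linear_combination -h + 6 * t ^ 2 * hU

end

section E6

variable {R : Type*} [CommRing R] {x y : R}

lemma E6_ne_two_torsion [NoZeroDivisors R] (h : y ^ 2 = x ^ 3 - 36 * x) (hy : y ≠ 0) :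
    x ≠ 0 ∧ x ≠ 6 ∧ x ≠ -6 := by
  have hprod : x * (x - 6) * (x + 6) ≠ 0 := by
    rw [show x * (x - 6) * (x + 6) = y ^ 2 by rw [h]; ring]
    exact pow_ne_zero 2 hy
  simp only [mul_ne_zero_iff, sub_ne_zero, ne_eq, add_eq_zero_iff_eq_neg] at hprod
  exact ⟨hprod.1.1, hprod.1.2, hprod.2⟩

lemma E6_pow_four_sub_pow_four (h : y ^ 2 = x ^ 3 - 36 * x) :
    (x ^ 2 + 12 * x - 36) ^ 4 - (x ^ 2 - 12 * x - 36) ^ 4 = 6 * (4 * y * (x ^ 2 + 36)) ^ 2 := by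
  linear_combination (-96 * (x ^ 2 + 36) ^ 2) * h

end E6

/-- A rational point `(x, y)` on `y² = x³ − 36x` with `y ≠ 0` has
`x ∉ {0, 6, −6}`, `x² − 12x − 36 ≠ 0`, `x² + 12x − 36 ≠ 0`, and the associated
quadruple `(U + t, U − t, U, V)` with `t = x² − 12x − 36`, `V = x² + 12x − 36`,
`U = 4y(x² + 36)/t` is a solution of `X⁴ + Y⁴ = 2(U⁴ + V⁴)` with all four
entries nonzero. -/
theorem nontrivial_solution_from_E6 (x y : ℚ) (h : y ^ 2 = x ^ 3 - 36 * x)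
    (hy : y ≠ 0) :
    x ≠ 0 ∧ x ≠ 6 ∧ x ≠ -6 ∧
    x ^ 2 - 12 * x - 36 ≠ 0 ∧ x ^ 2 + 12 * x - 36 ≠ 0 ∧
    (let t : ℚ := x ^ 2 - 12 * x - 36
     let V : ℚ := x ^ 2 + 12 * x - 36
     let U : ℚ := 4 * y * (x ^ 2 + 36) / t
     (U + t) ^ 4 + (U - t) ^ 4 = 2 * (U ^ 4 + V ^ 4) ∧
       U + t ≠ 0 ∧ U - t ≠ 0 ∧ U ≠ 0 ∧ V ≠ 0) := by
  have h2 : ¬IsSquare (2 : ℚ) := by norm_num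
  have ht : x ^ 2 - 12 * x - 36 ≠ 0 := by
    convert sq_sub_mul_sq_ne_zero h2 (x - 6) (by norm_num : (6 : ℚ) ≠ 0) using 1; ring
  have hV : x ^ 2 + 12 * x - 36 ≠ 0 := by
    convert sq_sub_mul_sq_ne_zero h2 (x + 6) (by norm_num : (6 : ℚ) ≠ 0) using 1; ring
  obtain ⟨hx0, hx6, hx6'⟩ := E6_ne_two_torsion h hy
  refine ⟨hx0, hx6, hx6', ht, hV, ?_⟩
  intro t V U
  have hquartic : 6 * (U * t) ^ 2 = V ^ 4 - t ^ 4 := by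
    rw [div_mul_cancel₀ _ ht]; exact (E6_pow_four_sub_pow_four h).symm
  have hUt : (U + t) * (U - t) ≠ 0 := by
    rw [← sq_sub_sq]
    exact sub_ne_zero.mpr (sq_ne_sq_of_mul_sq (by norm_num) ht hquartic)
  refine ⟨add_pow_four_add_sub_pow_four_of_mul_sq hquartic, left_ne_zero_of_mul hUt,
    right_ne_zero_of_mul hUt, div_ne_zero ?_ ht, hV⟩
  exact mul_ne_zero (mul_ne_zero four_ne_zero hy) (by positivity)
end
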